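/- Fix reals a, b > 0, k > 0, exponents 1 < q < p, l > p(k+1), and let A > 0, F > 0, G > 0. Define ψ(t) = a·A^{k+1}·t^{p(k+1)−q} + b·A·t^{p−q} − G·t^{l−q} for t > 0 and set M* = sup_{t>0} ψ(t) (which is positive and finite). Then for every λ with 0 < λ < M*/F, the function φ : (0,∞) → ℝ, φ(t) = (a/(p(k+1)))·A^{k+1}·t^{p(k+1)} + (b/p)·A·t^p − (λ/q)·F·t^q − (1/l)·G·t^l, has exactly two critical points 0 < t₃ < t₄: φ'(t) < 0 on (0,t₃), φ'(t) > 0 on (t₃,t₄), φ'(t) < 0 on (t₄,∞), φ''(t₃) > 0, φ''(t₄) < 0, and moreover φ(t₃) < 0 and φ(t) → −∞ as t → +∞. -/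
import Mathlib

open Real Filter Set Topology

private lemma hasDerivAt_comb4 (c1 c2 c3 c4 e1 e2 e3 e4 t : ℝ) (ht : 0 < t) :
    HasDerivAt (fun x : ℝ => c1 * x ^ e1 + c2 * x ^ e2 - c3 * x ^ e3 - c4 * x ^ e4)
      (c1 * (e1 * t ^ (e1 - 1)) + c2 * (e2 * t ^ (e2 - 1)) - c3 * (e3 * t ^ (e3 - 1))
        - c4 * (e4 * t ^ (e4 - 1))) t := by
  have h : ∀ e : ℝ, HasDerivAt (fun x : ℝ => x ^ e) (e * t ^ (e - 1)) t := fun e =>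
    Real.hasDerivAt_rpow_const (Or.inl ht.ne')
  exact ((((h e1).const_mul c1).add ((h e2).const_mul c2)).sub ((h e3).const_mul c3)).sub
    ((h e4).const_mul c4)

private lemma hasDerivAt_comb3 (c1 c2 c3 e1 e2 e3 t : ℝ) (ht : 0 < t) :
    HasDerivAt (fun x : ℝ => c1 * x ^ e1 + c2 * x ^ e2 - c3 * x ^ e3)
      (c1 * (e1 * t ^ (e1 - 1)) + c2 * (e2 * t ^ (e2 - 1)) - c3 * (e3 * t ^ (e3 - 1))) t := by
  have h : ∀ e : ℝ, HasDerivAt (fun x : ℝ => x ^ e) (e * t ^ (e - 1)) t := fun e =>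
    Real.hasDerivAt_rpow_const (Or.inl ht.ne')
  exact (((h e1).const_mul c1).add ((h e2).const_mul c2)).sub ((h e3).const_mul c3)

private noncomputable def gaux (a b k p q l A G t : ℝ) : ℝ :=
  a * A ^ (k + 1) * (p * (k + 1) - q) + b * A * (p - q) * t ^ (p - p * (k + 1))
    - G * (l - q) * t ^ (l - p * (k + 1))


/-- The fibering map of the Euler functional, as a scalar function of the
parameters `A = ‖u‖_{E_p}^p`, `F = ∫ f|u|^q dμ`, `G = ∫ g|u|^l dμ`. -/
noncomputable def phi (a b k p q l lam A F G t : ℝ) : ℝ :=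
  a / (p * (k + 1)) * A ^ (k + 1) * t ^ (p * (k + 1))
    + b / p * A * t ^ p - lam / q * F * t ^ q - 1 / l * G * t ^ l

/-- The auxiliary function `ψ(t) = a A^{k+1} t^{p(k+1)−q} + bA t^{p−q} − G t^{l−q}`,
so that `φ'(t) = t^{q−1}(ψ(t) − λF)`. -/
noncomputable def psi (a b k p q l A G t : ℝ) : ℝ :=
  a * A ^ (k + 1) * t ^ (p * (k + 1) - q) + b * A * t ^ (p - q) - G * t ^ (l - q)

/-- Case IV of the fibering map analysis: with `A, F, G > 0` and
`M* = sup_{t>0} ψ(t)` (positive and finite), for every `0 < λ < M*/F` the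
fibering map `φ` has exactly two positive critical points `t₃ < t₄`, with
`φ' < 0` on `(0,t₃)`, `φ' > 0` on `(t₃,t₄)`, `φ' < 0` on `(t₄,∞)`,
`φ''(t₃) > 0`, `φ''(t₄) < 0`, `φ(t₃) < 0`, and `φ(t) → −∞` as `t → +∞`. -/
theorem stmt_7 (a b k p q l A F G : ℝ)
    (ha : 0 < a) (hb : 0 < b) (hk : 0 < k)
    (hq : 1 < q) (hqp : q < p) (hl : p * (k + 1) < l)
    (hA : 0 < A) (hF : 0 < F) (hG : 0 < G) :
    BddAbove ((psi a b k p q l A G) '' Set.Ioi 0) ∧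
    0 < sSup ((psi a b k p q l A G) '' Set.Ioi 0) ∧
    ∀ lam : ℝ, 0 < lam → lam < sSup ((psi a b k p q l A G) '' Set.Ioi 0) / F →
      ∃ t₃ t₄ : ℝ, 0 < t₃ ∧ t₃ < t₄ ∧
        deriv (phi a b k p q l lam A F G) t₃ = 0 ∧
        deriv (phi a b k p q l lam A F G) t₄ = 0 ∧
        (∀ t : ℝ, 0 < t → deriv (phi a b k p q l lam A F G) t = 0 →
          t = t₃ ∨ t = t₄) ∧
        (∀ t : ℝ, 0 < t → t < t₃ → deriv (phi a b k p q l lam A F G) t < 0) ∧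
        (∀ t : ℝ, t₃ < t → t < t₄ → 0 < deriv (phi a b k p q l lam A F G) t) ∧
        (∀ t : ℝ, t₄ < t → deriv (phi a b k p q l lam A F G) t < 0) ∧
        0 < deriv (deriv (phi a b k p q l lam A F G)) t₃ ∧
        deriv (deriv (phi a b k p q l lam A F G)) t₄ < 0 ∧
        phi a b k p q l lam A F G t₃ < 0 ∧
        Filter.Tendsto (phi a b k p q l lam A F G) Filter.atTop Filter.atBot := by
  have hq0 : (0:ℝ) < q := one_pos.trans hq
  have hp : 0 < p := hq0.trans hqp
  have hpP : p < p * (k + 1) := by nlinarith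
  have hP0 : 0 < p * (k + 1) := hp.trans hpP
  have hl0 : 0 < l := hP0.trans hl
  have hql : q < l := by linarith
  have hqP : q < p * (k + 1) := by linarith
  set ψ := psi a b k p q l A G with hψdef
  set g := gaux a b k p q l A G with hgdef
  -- derivative of psi
  have hpsi : ∀ t : ℝ, 0 < t →
      HasDerivAt ψ (t ^ (p * (k + 1) - q - 1) * g t) t := by
    intro t ht
    have h := hasDerivAt_comb3 (a * A ^ (k + 1)) (b * A) G
      (p * (k + 1) - q) (p - q) (l - q) t ht
    have E2 : t ^ (p - q - 1) = t ^ (p * (k + 1) - q - 1) * t ^ (p - p * (k + 1)) := by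
      rw [← Real.rpow_add ht]; congr 1; ring
    have E3 : t ^ (l - q - 1) = t ^ (p * (k + 1) - q - 1) * t ^ (l - p * (k + 1)) := by
      rw [← Real.rpow_add ht]; congr 1; ring
    rw [hψdef]
    unfold psi
    convert h using 1
    rw [hgdef]
    unfold gaux
    rw [E2, E3]
    ring
  -- monotonicity facts for g
  have hganti : StrictAntiOn g (Ioi 0) := by
    intro x hx y hy hxy
    rw [hgdef]; unfold gaux
    have h1 : y ^ (p - p * (k + 1)) < x ^ (p - p * (k + 1)) :=
      Real.rpow_lt_rpow_of_neg hx hxy (by linarith)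
    have h2 : x ^ (l - p * (k + 1)) < y ^ (l - p * (k + 1)) :=
      Real.rpow_lt_rpow (le_of_lt hx) hxy (by linarith)
    have hc2 : 0 < b * A * (p - q) := by
      have : 0 < p - q := by linarith
      positivity
    have hc3 : 0 < G * (l - q) := by
      have : 0 < l - q := by linarith
      positivity
    have := mul_lt_mul_of_pos_left h1 hc2
    have := mul_lt_mul_of_pos_left h2 hc3
    linarith
  have hc2 : (0:ℝ) < b * A * (p - q) := by
    have : 0 < p - q := by linarith
    positivity
  have hc3 : (0:ℝ) < G * (l - q) := by
    have : 0 < l - q := by linarith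
    positivity
  -- continuity
  have hψcont : Continuous ψ := by
    rw [hψdef]; unfold psi
    exact (((continuous_const.mul (Real.continuous_rpow_const (by linarith))).add
      (continuous_const.mul (Real.continuous_rpow_const (by linarith)))).sub
      (continuous_const.mul (Real.continuous_rpow_const (by linarith))))
  have hgcont : ContinuousOn g (Ioi 0) := by
    rw [hgdef]; unfold gaux
    intro x hx
    have h0 : ∀ C e : ℝ, ContinuousAt (fun u : ℝ => C * u ^ e) x := fun C e =>
      continuousAt_const.mul (Real.continuousAt_rpow_const x e (Or.inl (ne_of_gt hx)))
    exact ((continuousAt_const.add (h0 _ _)).sub (h0 _ _)).continuousWithinAt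
  -- limits of g
  have hgbot : Tendsto g atTop atBot := by
    have h2 : Tendsto (fun t : ℝ => b * A * (p - q) * t ^ (p - p * (k + 1))) atTop
        (𝓝 (b * A * (p - q) * 0)) := by
      have := (tendsto_rpow_neg_atTop (y := p * (k + 1) - p) (by linarith)).const_mul
        (b * A * (p - q))
      simpa [show -(p * (k + 1) - p) = p - p * (k + 1) by ring] using this
    have h3 : Tendsto (fun t : ℝ => G * (l - q) * t ^ (l - p * (k + 1))) atTop atTop :=
      (tendsto_rpow_atTop (by linarith)).const_mul_atTop hc3
    have h4 : Tendsto (fun t : ℝ => (a * A ^ (k + 1) * (p * (k + 1) - q)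
        + b * A * (p - q) * t ^ (p - p * (k + 1)))
        + -(G * (l - q) * t ^ (l - p * (k + 1)))) atTop atBot :=
      (tendsto_const_nhds.add h2).add_atBot (tendsto_neg_atTop_atBot.comp h3)
    refine h4.congr fun t => ?_
    rw [hgdef]; unfold gaux; ring
  have hgtop : Tendsto g (𝓝[>] (0:ℝ)) atTop := by
    have hmain : Tendsto (fun t : ℝ => t ^ (p - p * (k + 1))) (𝓝[>] (0:ℝ)) atTop := by
      have h := (tendsto_rpow_atTop (y := p * (k + 1) - p) (by linarith)).comp
        tendsto_inv_nhdsGT_zero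
      refine h.congr' ?_
      filter_upwards [self_mem_nhdsWithin] with t ht
      have ht0 : (0:ℝ) < t := ht
      show (t⁻¹) ^ (p * (k + 1) - p) = t ^ (p - p * (k + 1))
      rw [Real.inv_rpow ht0.le, ← Real.rpow_neg ht0.le]
      congr 1; ring
    have h0 : ∀ e : ℝ, 0 < e → Tendsto (fun t : ℝ => t ^ e) (𝓝[>] (0:ℝ)) (𝓝 0) := by
      intro e he
      have hc : Tendsto (fun t : ℝ => t ^ e) (𝓝[>] (0:ℝ)) (𝓝 ((0:ℝ) ^ e)) :=
        (Real.continuousAt_rpow_const 0 e (Or.inr he.le)).tendsto.mono_left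
          nhdsWithin_le_nhds
      simpa [Real.zero_rpow he.ne'] using hc
    have hrest : Tendsto (fun t : ℝ => a * A ^ (k + 1) * (p * (k + 1) - q)
        - G * (l - q) * t ^ (l - p * (k + 1))) (𝓝[>] (0:ℝ))
        (𝓝 (a * A ^ (k + 1) * (p * (k + 1) - q) - G * (l - q) * 0)) :=
      tendsto_const_nhds.sub ((h0 _ (by linarith)).const_mul _)
    have h5 := (hmain.const_mul_atTop hc2).atTop_add hrest
    refine h5.congr fun t => ?_
    rw [hgdef]; unfold gaux; ring
  -- the maximum point of psi
  obtain ⟨x1, hgx1, hx1⟩ := ((hgtop.eventually_gt_atTop 0).and self_mem_nhdsWithin).exists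
  have hx1' : (0:ℝ) < x1 := hx1
  obtain ⟨x2, hgx2, hx12⟩ := ((hgbot.eventually_lt_atBot 0).and (eventually_gt_atTop x1)).exists
  have hiv := intermediate_value_Icc' (le_of_lt hx12)
    (hgcont.mono (fun u hu => lt_of_lt_of_le hx1' hu.1))
  obtain ⟨sstar, hsmem, hgs⟩ := hiv ⟨le_of_lt hgx2, le_of_lt hgx1⟩
  have hs0 : 0 < sstar := lt_of_lt_of_le hx1' hsmem.1
  have hgpos : ∀ t : ℝ, 0 < t → t < sstar → 0 < g t := by
    intro t ht hts
    have := hganti (Set.mem_Ioi.mpr ht) (Set.mem_Ioi.mpr hs0) hts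
    rw [hgs] at this; exact this
  have hgneg : ∀ t : ℝ, sstar < t → g t < 0 := by
    intro t hts
    have := hganti (Set.mem_Ioi.mpr hs0) (Set.mem_Ioi.mpr (hs0.trans hts)) hts
    rw [hgs] at this; exact this
  -- monotonicity of psi
  have hmono : StrictMonoOn ψ (Ioc 0 sstar) := by
    apply strictMonoOn_of_deriv_pos (convex_Ioc 0 sstar) hψcont.continuousOn
    intro t ht
    rw [interior_Ioc] at ht
    rw [(hpsi t ht.1).deriv]
    exact mul_pos (Real.rpow_pos_of_pos ht.1 _) (hgpos t ht.1 ht.2)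
  have hanti2 : StrictAntiOn ψ (Ici sstar) := by
    apply strictAntiOn_of_deriv_neg (convex_Ici sstar) hψcont.continuousOn
    intro t ht
    rw [interior_Ici] at ht
    rw [(hpsi t (hs0.trans ht)).deriv]
    exact mul_neg_of_pos_of_neg (Real.rpow_pos_of_pos (hs0.trans ht) _) (hgneg t ht)
  have hub : ∀ t : ℝ, 0 < t → ψ t ≤ ψ sstar := by
    intro t ht
    rcases lt_trichotomy t sstar with h | rfl | h
    · exact (hmono ⟨ht, h.le⟩ ⟨hs0, le_refl _⟩ h).le
    · exact le_refl _
    · exact (hanti2 self_mem_Ici (le_of_lt h) h).le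
  have hbdd : BddAbove (ψ '' Ioi 0) := ⟨ψ sstar, by rintro y ⟨t, ht, rfl⟩; exact hub t ht⟩
  have hsup : sSup (ψ '' Ioi 0) = ψ sstar := by
    apply le_antisymm
    · exact csSup_le ⟨ψ sstar, sstar, hs0, rfl⟩ (by rintro y ⟨t, ht, rfl⟩; exact hub t ht)
    · exact le_csSup hbdd ⟨sstar, hs0, rfl⟩
  -- psi vanishes at 0 and is positive at the max point
  have hψ0 : ψ 0 = 0 := by
    rw [hψdef]; unfold psi
    rw [Real.zero_rpow (ne_of_gt (by linarith : (0:ℝ) < p * (k + 1) - q)),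
        Real.zero_rpow (ne_of_gt (by linarith : (0:ℝ) < p - q)),
        Real.zero_rpow (ne_of_gt (by linarith : (0:ℝ) < l - q))]
    ring
  have h0small : ∀ e : ℝ, 0 < e → Tendsto (fun t : ℝ => t ^ e) (𝓝[>] (0:ℝ)) (𝓝 0) := by
    intro e he
    have hc : Tendsto (fun t : ℝ => t ^ e) (𝓝[>] (0:ℝ)) (𝓝 ((0:ℝ) ^ e)) :=
      (Real.continuousAt_rpow_const 0 e (Or.inr he.le)).tendsto.mono_left nhdsWithin_le_nhds
    simpa [Real.zero_rpow he.ne'] using hc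
  have hψpos : 0 < ψ sstar := by
    have hv : Tendsto (fun t : ℝ => a * A ^ (k + 1) * t ^ (p * (k + 1) - p) + b * A
        - G * t ^ (l - p)) (𝓝[>] (0:ℝ))
        (𝓝 (a * A ^ (k + 1) * 0 + b * A - G * 0)) :=
      (((h0small _ (by linarith)).const_mul _).add tendsto_const_nhds).sub
        ((h0small _ (by linarith)).const_mul _)
    have hbApos : (0:ℝ) < a * A ^ (k + 1) * 0 + b * A - G * 0 := by
      have := mul_pos hb hA; linarith
    obtain ⟨t0, hvt0, ht0⟩ := ((hv.eventually (lt_mem_nhds hbApos)).and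
      self_mem_nhdsWithin).exists
    have ht0' : (0:ℝ) < t0 := ht0
    have hψt0 : ψ t0 = t0 ^ (p - q) * (a * A ^ (k + 1) * t0 ^ (p * (k + 1) - p) + b * A
        - G * t0 ^ (l - p)) := by
      rw [hψdef]; unfold psi
      have E1 : t0 ^ (p * (k + 1) - q) = t0 ^ (p - q) * t0 ^ (p * (k + 1) - p) := by
        rw [← Real.rpow_add ht0', show p - q + (p * (k + 1) - p) = p * (k + 1) - q by ring]
      have E2 : t0 ^ (l - q) = t0 ^ (p - q) * t0 ^ (l - p) := by
        rw [← Real.rpow_add ht0', show p - q + (l - p) = l - q by ring]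
      rw [E1, E2]; ring
    have hpos0 : 0 < ψ t0 := by
      rw [hψt0]; exact mul_pos (Real.rpow_pos_of_pos ht0' _) hvt0
    linarith [hub t0 ht0']
  -- psi tends to -infinity
  have hψbot : Tendsto ψ atTop atBot := by
    have hz : ∀ (C e : ℝ), 0 < e → Tendsto (fun t : ℝ => C * t ^ (-e)) atTop (𝓝 (C * 0)) :=
      fun C e he => (tendsto_rpow_neg_atTop he).const_mul C
    have h1 := hz (a * A ^ (k + 1)) (l - p * (k + 1)) (by linarith)
    have h2 := hz (b * A) (l - p) (by linarith)
    rw [show -(l - p * (k + 1)) = p * (k + 1) - l by ring] at h1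
    rw [show -(l - p) = p - l by ring] at h2
    have hw : Tendsto (fun t : ℝ => a * A ^ (k + 1) * t ^ (p * (k + 1) - l)
        + b * A * t ^ (p - l) - G) atTop
        (𝓝 (a * A ^ (k + 1) * 0 + b * A * 0 - G)) := (h1.add h2).sub tendsto_const_nhds
    have hCneg : a * A ^ (k + 1) * 0 + b * A * 0 - G < 0 := by linarith
    have hmul := (tendsto_rpow_atTop (by linarith : (0:ℝ) < l - q)).atTop_mul_neg hCneg hw
    refine Filter.Tendsto.congr' ?_ hmul
    filter_upwards [eventually_gt_atTop (0:ℝ)] with t ht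
    have E1 : t ^ (p * (k + 1) - q) = t ^ (l - q) * t ^ (p * (k + 1) - l) := by
      rw [← Real.rpow_add ht, show l - q + (p * (k + 1) - l) = p * (k + 1) - q by ring]
    have E2 : t ^ (p - q) = t ^ (l - q) * t ^ (p - l) := by
      rw [← Real.rpow_add ht, show l - q + (p - l) = p - q by ring]
    rw [hψdef]; unfold psi
    rw [E1, E2]; ring
  refine ⟨hbdd, by rw [hsup]; exact hψpos, ?_⟩
  intro lam hlam0 hlam
  have hlamF : lam * F < ψ sstar := by
    rw [hsup] at hlam
    exact (lt_div_iff₀ hF).mp hlam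
  have hlamF0 : 0 < lam * F := mul_pos hlam0 hF
  -- derivative of phi
  have hexp : ∀ x : ℝ, 0 < x → x ^ (q - 1) * (ψ x - lam * F)
      = a * A ^ (k + 1) * x ^ (p * (k + 1) - 1) + b * A * x ^ (p - 1)
        - lam * F * x ^ (q - 1) - G * x ^ (l - 1) := by
    intro x hx
    have E1 : x ^ (p * (k + 1) - 1) = x ^ (q - 1) * x ^ (p * (k + 1) - q) := by
      rw [← Real.rpow_add hx, show q - 1 + (p * (k + 1) - q) = p * (k + 1) - 1 by ring]
    have E2 : x ^ (p - 1) = x ^ (q - 1) * x ^ (p - q) := by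
      rw [← Real.rpow_add hx, show q - 1 + (p - q) = p - 1 by ring]
    have E3 : x ^ (l - 1) = x ^ (q - 1) * x ^ (l - q) := by
      rw [← Real.rpow_add hx, show q - 1 + (l - q) = l - 1 by ring]
    rw [hψdef]; unfold psi
    rw [E1, E2, E3]; ring
  have hphi : ∀ t : ℝ, 0 < t → HasDerivAt (phi a b k p q l lam A F G)
      (t ^ (q - 1) * (ψ t - lam * F)) t := by
    intro t ht
    have h := hasDerivAt_comb4 (a / (p * (k + 1)) * A ^ (k + 1)) (b / p * A) (lam / q * F)
      (1 / l * G) (p * (k + 1)) p q l t ht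
    have h2 : a / (p * (k + 1)) * A ^ (k + 1) * (p * (k + 1) * t ^ (p * (k + 1) - 1))
        + b / p * A * (p * t ^ (p - 1)) - lam / q * F * (q * t ^ (q - 1))
        - 1 / l * G * (l * t ^ (l - 1)) = t ^ (q - 1) * (ψ t - lam * F) := by
      rw [hexp t ht]
      field_simp
    rw [← h2]
    unfold phi
    exact h
  have hderiv : ∀ t : ℝ, 0 < t → deriv (phi a b k p q l lam A F G) t
      = t ^ (q - 1) * (ψ t - lam * F) := fun t ht => (hphi t ht).deriv
  -- find t₃ and t₄
  have hψ0tend : Tendsto ψ (𝓝[>] (0:ℝ)) (𝓝 0) := by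
    have h := (hψcont.tendsto 0).mono_left (nhdsWithin_le_nhds (s := Ioi (0:ℝ)))
    rwa [hψ0] at h
  obtain ⟨ε, hεψ, hεs, hε0⟩ := ((hψ0tend.eventually (gt_mem_nhds hlamF0)).and
    (((eventually_lt_nhds hs0).filter_mono nhdsWithin_le_nhds).and
      self_mem_nhdsWithin)).exists
  have hε0' : (0:ℝ) < ε := hε0
  obtain ⟨t₃, ht₃mem, ht₃ψ⟩ := intermediate_value_Icc (le_of_lt hεs) hψcont.continuousOn
    ⟨hεψ.le, hlamF.le⟩
  have ht₃0 : 0 < t₃ := lt_of_lt_of_le hε0' ht₃mem.1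
  have ht₃s : t₃ < sstar := lt_of_le_of_ne ht₃mem.2 (by
    rintro rfl
    rw [ht₃ψ] at hlamF
    exact lt_irrefl _ hlamF)
  obtain ⟨R, hRψ, hRs⟩ := ((hψbot.eventually_lt_atBot (lam * F)).and
    (eventually_gt_atTop sstar)).exists
  obtain ⟨t₄, ht₄mem, ht₄ψ⟩ := intermediate_value_Icc' (le_of_lt hRs) hψcont.continuousOn
    ⟨hRψ.le, hlamF.le⟩
  have ht₄s : sstar < t₄ := lt_of_le_of_ne ht₄mem.1 (by
    intro h
    rw [← h] at ht₄ψ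
    rw [ht₄ψ] at hlamF
    exact lt_irrefl _ hlamF)
  have ht₄0 : 0 < t₄ := hs0.trans ht₄s
  have ht₃₄ : t₃ < t₄ := ht₃s.trans ht₄s
  -- sign of psi - lam F
  have hsign1 : ∀ t : ℝ, 0 < t → t < t₃ → ψ t < lam * F := by
    intro t ht htt
    have := hmono ⟨ht, (htt.trans ht₃s).le⟩ ⟨ht₃0, ht₃s.le⟩ htt
    rwa [ht₃ψ] at this
  have hsign2 : ∀ t : ℝ, t₃ < t → t < t₄ → lam * F < ψ t := by
    intro t h1 h2
    rcases le_or_gt t sstar with h | h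
    · have := hmono ⟨ht₃0, ht₃s.le⟩ ⟨ht₃0.trans h1, h⟩ h1
      rwa [ht₃ψ] at this
    · have := hanti2 (le_of_lt h) ht₄s.le h2
      rwa [ht₄ψ] at this
  have hsign3 : ∀ t : ℝ, t₄ < t → ψ t < lam * F := by
    intro t h
    have := hanti2 ht₄s.le (ht₄s.le.trans h.le) h
    rwa [ht₄ψ] at this
  -- first-derivative facts
  have hdt₃ : deriv (phi a b k p q l lam A F G) t₃ = 0 := by
    rw [hderiv t₃ ht₃0, ht₃ψ, sub_self, mul_zero]
  have hdt₄ : deriv (phi a b k p q l lam A F G) t₄ = 0 := by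
    rw [hderiv t₄ ht₄0, ht₄ψ, sub_self, mul_zero]
  have huniq : ∀ t : ℝ, 0 < t → deriv (phi a b k p q l lam A F G) t = 0 →
      t = t₃ ∨ t = t₄ := by
    intro t ht hd
    rw [hderiv t ht] at hd
    have hψt : ψ t = lam * F := by
      rcases mul_eq_zero.mp hd with h | h
      · exact absurd h (ne_of_gt (Real.rpow_pos_of_pos ht _))
      · linarith [sub_eq_zero.mp h]
    rcases lt_trichotomy t t₃ with h | h | h
    · exact absurd hψt (ne_of_lt (hsign1 t ht h))
    · exact Or.inl h
    rcases lt_trichotomy t t₄ with h' | h' | h'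
    · exact absurd hψt (ne_of_gt (hsign2 t h h'))
    · exact Or.inr h'
    · exact absurd hψt (ne_of_lt (hsign3 t h'))
  have hneg1 : ∀ t : ℝ, 0 < t → t < t₃ → deriv (phi a b k p q l lam A F G) t < 0 := by
    intro t ht h
    rw [hderiv t ht]
    exact mul_neg_of_pos_of_neg (Real.rpow_pos_of_pos ht _) (sub_neg.mpr (hsign1 t ht h))
  have hpos2 : ∀ t : ℝ, t₃ < t → t < t₄ → 0 < deriv (phi a b k p q l lam A F G) t := by
    intro t h1 h2
    have ht : 0 < t := ht₃0.trans h1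
    rw [hderiv t ht]
    exact mul_pos (Real.rpow_pos_of_pos ht _) (sub_pos.mpr (hsign2 t h1 h2))
  have hneg3 : ∀ t : ℝ, t₄ < t → deriv (phi a b k p q l lam A F G) t < 0 := by
    intro t h
    have ht : 0 < t := ht₄0.trans h
    rw [hderiv t ht]
    exact mul_neg_of_pos_of_neg (Real.rpow_pos_of_pos ht _) (sub_neg.mpr (hsign3 t h))
  -- second derivative
  have hd2 : ∀ t : ℝ, 0 < t → deriv (deriv (phi a b k p q l lam A F G)) t
      = t ^ (q - 2) * ((q - 1) * (ψ t - lam * F)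
        + t ^ (p * (k + 1) - q) * g t) := by
    intro t ht
    have hev : deriv (phi a b k p q l lam A F G) =ᶠ[𝓝 t]
        (fun x : ℝ => a * A ^ (k + 1) * x ^ (p * (k + 1) - 1) + b * A * x ^ (p - 1)
          - lam * F * x ^ (q - 1) - G * x ^ (l - 1)) := by
      filter_upwards [isOpen_Ioi.mem_nhds (Set.mem_Ioi.mpr ht)] with x hx
      rw [hderiv x hx, hexp x hx]
    rw [hev.deriv_eq]
    have h := hasDerivAt_comb4 (a * A ^ (k + 1)) (b * A) (lam * F) G
      (p * (k + 1) - 1) (p - 1) (q - 1) (l - 1) t ht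
    rw [h.deriv]
    have E1 : t ^ (p * (k + 1) - 1 - 1) = t ^ (q - 2) * t ^ (p * (k + 1) - q) := by
      rw [← Real.rpow_add ht, show q - 2 + (p * (k + 1) - q) = p * (k + 1) - 1 - 1 by ring]
    have E2 : t ^ (p - 1 - 1) = t ^ (q - 2) * (t ^ (p * (k + 1) - q)
        * t ^ (p - p * (k + 1))) := by
      rw [← Real.rpow_add ht, ← Real.rpow_add ht,
        show q - 2 + (p * (k + 1) - q + (p - p * (k + 1))) = p - 1 - 1 by ring]
    have E3 : t ^ (q - 1 - 1) = t ^ (q - 2) := by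
      rw [show q - 1 - 1 = q - 2 by ring]
    have E4 : t ^ (l - 1 - 1) = t ^ (q - 2) * (t ^ (p * (k + 1) - q)
        * t ^ (l - p * (k + 1))) := by
      rw [← Real.rpow_add ht, ← Real.rpow_add ht,
        show q - 2 + (p * (k + 1) - q + (l - p * (k + 1))) = l - 1 - 1 by ring]
    have E5 : t ^ (p - q) = t ^ (p * (k + 1) - q) * t ^ (p - p * (k + 1)) := by
      rw [← Real.rpow_add ht, show p * (k + 1) - q + (p - p * (k + 1)) = p - q by ring]
    have E6 : t ^ (l - q) = t ^ (p * (k + 1) - q) * t ^ (l - p * (k + 1)) := by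
      rw [← Real.rpow_add ht, show p * (k + 1) - q + (l - p * (k + 1)) = l - q by ring]
    rw [E1, E2, E3, E4, hψdef, hgdef]
    unfold psi gaux
    rw [E5, E6]
    ring
  have hdd3 : 0 < deriv (deriv (phi a b k p q l lam A F G)) t₃ := by
    rw [hd2 t₃ ht₃0, ht₃ψ, sub_self, mul_zero, zero_add]
    exact mul_pos (Real.rpow_pos_of_pos ht₃0 _)
      (mul_pos (Real.rpow_pos_of_pos ht₃0 _) (hgpos t₃ ht₃0 ht₃s))
  have hdd4 : deriv (deriv (phi a b k p q l lam A F G)) t₄ < 0 := by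
    rw [hd2 t₄ ht₄0, ht₄ψ, sub_self, mul_zero, zero_add]
    exact mul_neg_of_pos_of_neg (Real.rpow_pos_of_pos ht₄0 _)
      (mul_neg_of_pos_of_neg (Real.rpow_pos_of_pos ht₄0 _) (hgneg t₄ ht₄s))
  -- phi is negative at t₃
  have hφcont : Continuous (phi a b k p q l lam A F G) := by
    unfold phi
    exact (((continuous_const.mul (Real.continuous_rpow_const hP0.le)).add
      (continuous_const.mul (Real.continuous_rpow_const hp.le))).sub
      (continuous_const.mul (Real.continuous_rpow_const hq0.le))).sub
      (continuous_const.mul (Real.continuous_rpow_const hl0.le))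
  have hφanti : StrictAntiOn (phi a b k p q l lam A F G) (Icc 0 t₃) := by
    apply strictAntiOn_of_deriv_neg (convex_Icc 0 t₃) hφcont.continuousOn
    intro t ht
    rw [interior_Icc] at ht
    exact hneg1 t ht.1 ht.2
  have hφ0 : phi a b k p q l lam A F G 0 = 0 := by
    unfold phi
    rw [Real.zero_rpow hP0.ne', Real.zero_rpow hp.ne', Real.zero_rpow hq0.ne',
        Real.zero_rpow hl0.ne']
    ring
  have hφt₃ : phi a b k p q l lam A F G t₃ < 0 := by
    have := hφanti (left_mem_Icc.mpr ht₃0.le) (right_mem_Icc.mpr ht₃0.le) ht₃0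
    rwa [hφ0] at this
  -- phi tends to -infinity
  have hφbot : Tendsto (phi a b k p q l lam A F G) atTop atBot := by
    have hz : ∀ (C e : ℝ), 0 < e → Tendsto (fun t : ℝ => C * t ^ (-e)) atTop (𝓝 (C * 0)) :=
      fun C e he => (tendsto_rpow_neg_atTop he).const_mul C
    have h1 := hz (a / (p * (k + 1)) * A ^ (k + 1)) (l - p * (k + 1)) (by linarith)
    have h2 := hz (b / p * A) (l - p) (by linarith)
    have h3 := hz (lam / q * F) (l - q) (by linarith)
    rw [show -(l - p * (k + 1)) = p * (k + 1) - l by ring] at h1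
    rw [show -(l - p) = p - l by ring] at h2
    rw [show -(l - q) = q - l by ring] at h3
    have hw := ((h1.add h2).sub h3).sub
      (tendsto_const_nhds (α := ℝ) (f := atTop) (x := 1 / l * G))
    have hw' : Tendsto (fun t : ℝ => a / (p * (k + 1)) * A ^ (k + 1) * t ^ (p * (k + 1) - l)
        + b / p * A * t ^ (p - l) - lam / q * F * t ^ (q - l) - 1 / l * G) atTop
        (𝓝 (-(1 / l * G))) := by
      have heq : a / (p * (k + 1)) * A ^ (k + 1) * 0 + b / p * A * 0 - lam / q * F * 0
          - 1 / l * G = -(1 / l * G) := by ring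
      rw [← heq]
      exact hw
    have hneg : -(1 / l * G) < 0 := neg_lt_zero.mpr (by positivity)
    have hmul := (tendsto_rpow_atTop hl0).atTop_mul_neg hneg hw'
    refine Filter.Tendsto.congr' ?_ hmul
    filter_upwards [eventually_gt_atTop (0:ℝ)] with t ht
    have E1 : t ^ (p * (k + 1)) = t ^ l * t ^ (p * (k + 1) - l) := by
      rw [← Real.rpow_add ht, show l + (p * (k + 1) - l) = p * (k + 1) by ring]
    have E2 : t ^ p = t ^ l * t ^ (p - l) := by
      rw [← Real.rpow_add ht, show l + (p - l) = p by ring]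
    have E3 : t ^ q = t ^ l * t ^ (q - l) := by
      rw [← Real.rpow_add ht, show l + (q - l) = q by ring]
    unfold phi
    rw [E1, E2, E3]
    ring
  exact ⟨t₃, t₄, ht₃0, ht₃₄, hdt₃, hdt₄, huniq, hneg1, hpos2, hneg3, hdd3, hdd4, hφt₃, hφbot⟩
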